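/- arXiv:2603.14378 — 2 statements merged into one kernel-verified Lean document; each statement's English description precedes it below -/
import Mathlib

section
/- Let G be a finite group and let (ρ_t)_{t∈T} be a complete family of irreducible unitary matrix representations of G with dimensions n_t. Let U be the matrix with rows indexed by triples (t,i,j) (t ∈ T, i,j ∈ Fin n_t) and columns indexed by G, with entries U_{(t,i,j),g} = (n_t/|G|)^{1/2} · ρ_t(g)_{ij}, viewed as a square matrix via any bijection between {(t,i,j)} and G (which exist since Σ_t n_t² = |G|). Let s := |{g ∈ G : g = g⁻¹}|. Then det(U)² = (−1)^{(|G|−s)/2 + Σ_{t∈T} n_t(n_t−1)/2} (a quantity independent of the chosen bijection). -/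
/-- The representation on `Fin m → ℂ` associated to a matrix representation. -/
noncomputable def matRep {G : Type*} [Monoid G] {m : ℕ}
    (ρ : G →* Matrix (Fin m) (Fin m) ℂ) : Representation ℂ G (Fin m → ℂ) :=
  (Matrix.toLinAlgEquiv'.toAlgHom.toRingHom.toMonoidHom).comp ρ
/-- The matrix `Σ_g x_g ρ(g)` with entries in `MvPolynomial G ℂ`. -/
noncomputable def repMatrix {G : Type*} [Group G] [Fintype G] {m : ℕ}
    (ρ : G →* Matrix (Fin m) (Fin m) ℂ) :
    Matrix (Fin m) (Fin m) (MvPolynomial G ℂ) :=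
  ∑ g : G, (MvPolynomial.X g : MvPolynomial G ℂ) • (ρ g).map (MvPolynomial.C : ℂ → MvPolynomial G ℂ)
/-- A complete family of irreducible unitary matrix representations of a finite group `G`:
each `ρ t g` is unitary, each `ρ t` is irreducible (the associated module over
`MonoidAlgebra ℂ G` is simple), the representations are pairwise non-isomorphic, and
`Σ_t n_t² = |G|`. -/
structure IsCompleteIrrFamily (G : Type*) [Group G] [Fintype G]
    {T : Type*} [Fintype T] (n : T → ℕ)
    (ρ : ∀ t, G →* Matrix (Fin (n t)) (Fin (n t)) ℂ) : Prop where
  unitary : ∀ t g, ρ t g ∈ Matrix.unitaryGroup (Fin (n t)) ℂ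
  irred : ∀ t, IsSimpleModule (MonoidAlgebra ℂ G) (matRep (ρ t)).asModule
  noniso : ∀ t t', t ≠ t' →
    IsEmpty ((matRep (ρ t)).asModule ≃ₗ[MonoidAlgebra ℂ G] (matRep (ρ t')).asModule)
  sum_sq : ∑ t, (n t) ^ 2 = Fintype.card G

/-! Schur's orthogonality relations say that the Fourier matrix `U` is unitary, so
`det U * conj (det U) = 1`. Since each `ρ_t` is unitary, `conj (ρ_t(g)_{ij}) = ρ_t(g⁻¹)_{ji}`:
conjugating `U` entrywise permutes its rows by the transposition `(t, i, j) ↦ (t, j, i)` and its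
columns by `g ↦ g⁻¹`. Hence `conj (det U) = ε det U`, where `ε` is the product of the signs of
these two involutions, and `det U ^ 2 = ε`. An involution of `N` points with `f` fixed points is a
product of `(N - f) / 2` disjoint transpositions, which gives the exponent. -/

open Finset
open scoped Matrix

theorem matRep_apply {G : Type*} [Monoid G] {m : ℕ} (ρ : G →* Matrix (Fin m) (Fin m) ℂ)
    (g : G) : matRep ρ g = Matrix.toLin' (ρ g) := rfl

noncomputable def matRepHom {G : Type*} [Group G] {m m' : ℕ}
    {ρ : G →* Matrix (Fin m) (Fin m) ℂ} {ρ' : G →* Matrix (Fin m') (Fin m') ℂ}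
    (A : Matrix (Fin m) (Fin m') ℂ) (hA : ∀ g, ρ g * A = A * ρ' g) :
    (matRep ρ').asModule →ₗ[MonoidAlgebra ℂ G] (matRep ρ).asModule :=
  Representation.IntertwiningMap.equivLinearMapAsModule _ _
    ⟨Matrix.toLin' A, fun g => by
      rw [matRep_apply, matRep_apply, ← Matrix.toLin'_mul, ← Matrix.toLin'_mul, hA]⟩

section Schur

variable {G : Type*} [Group G] {m m' : ℕ}
  {ρ : G →* Matrix (Fin m) (Fin m) ℂ} {ρ' : G →* Matrix (Fin m') (Fin m') ℂ}

theorem eq_zero_of_intertwines [IsSimpleModule (MonoidAlgebra ℂ G) (matRep ρ).asModule]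
    [IsSimpleModule (MonoidAlgebra ℂ G) (matRep ρ').asModule]
    (hρρ' : IsEmpty ((matRep ρ').asModule ≃ₗ[MonoidAlgebra ℂ G] (matRep ρ).asModule))
    {A : Matrix (Fin m) (Fin m') ℂ} (hA : ∀ g, ρ g * A = A * ρ' g) : A = 0 := by
  obtain hbij | hzero := (matRepHom A hA).bijective_or_eq_zero
  · exact hρρ'.elim (LinearEquiv.ofBijective _ hbij)
  · refine Matrix.toLin'.injective (LinearMap.ext fun v => ?_)
    rw [map_zero]
    exact LinearMap.congr_fun hzero v

theorem exists_eq_smul_one_of_intertwines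
    [IsSimpleModule (MonoidAlgebra ℂ G) (matRep ρ).asModule]
    {A : Matrix (Fin m) (Fin m) ℂ} (hA : ∀ g, ρ g * A = A * ρ g) : ∃ c : ℂ, A = c • 1 := by
  obtain ⟨c, hc⟩ :=
    (IsSimpleModule.algebraMap_end_bijective_of_isAlgClosed ℂ).2 (matRepHom A hA)
  refine ⟨c, Matrix.toLin'.injective (LinearMap.ext fun v => ?_)⟩
  rw [map_smul, Matrix.toLin'_one]
  exact (LinearMap.congr_fun hc v).symm

end Schur

section Orthogonality

variable {G : Type*} [Group G] [Fintype G] {m m' : ℕ}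
  {ρ : G →* Matrix (Fin m) (Fin m) ℂ} {ρ' : G →* Matrix (Fin m') (Fin m') ℂ}

theorem intertwines_sum_mul_mul_inv (B : Matrix (Fin m) (Fin m') ℂ) (h : G) :
    ρ h * ∑ g, ρ g * B * ρ' g⁻¹ = (∑ g, ρ g * B * ρ' g⁻¹) * ρ' h := by
  rw [Matrix.mul_sum, Matrix.sum_mul]
  refine Fintype.sum_equiv (Equiv.mulLeft h) _ _ fun g => ?_
  simp only [Equiv.coe_mulLeft, mul_inv_rev, map_mul, Matrix.mul_assoc]
  rw [← map_mul ρ' h⁻¹ h, inv_mul_cancel, map_one, Matrix.mul_one]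

theorem sum_mul_single_mul_inv_apply (i j : Fin m) (i' j' : Fin m') :
    (∑ g, ρ g * Matrix.single j j' (1 : ℂ) * ρ' g⁻¹) i i' =
      ∑ g, ρ g i j * ρ' g⁻¹ j' i' := by
  simp [Matrix.sum_apply, Matrix.mul_apply, Matrix.single, ite_and]

theorem sum_apply_mul_inv_apply_eq_zero
    [IsSimpleModule (MonoidAlgebra ℂ G) (matRep ρ).asModule]
    [IsSimpleModule (MonoidAlgebra ℂ G) (matRep ρ').asModule]
    (hρρ' : IsEmpty ((matRep ρ').asModule ≃ₗ[MonoidAlgebra ℂ G] (matRep ρ).asModule))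
    (i j : Fin m) (i' j' : Fin m') : ∑ g, ρ g i j * ρ' g⁻¹ j' i' = 0 := by
  rw [← sum_mul_single_mul_inv_apply,
    eq_zero_of_intertwines hρρ' (intertwines_sum_mul_mul_inv _), Matrix.zero_apply]

theorem natCast_mul_sum_apply_mul_inv_apply
    [IsSimpleModule (MonoidAlgebra ℂ G) (matRep ρ).asModule] (i j i' j' : Fin m) :
    (m : ℂ) * ∑ g, ρ g i j * ρ g⁻¹ j' i' =
      if i = i' ∧ j = j' then (Fintype.card G : ℂ) else 0 := by
  set E := Matrix.single j j' (1 : ℂ)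
  obtain ⟨c, hc⟩ :=
    exists_eq_smul_one_of_intertwines (intertwines_sum_mul_mul_inv (ρ := ρ) E)
  have htrace_conj (g : G) : (ρ g * E * ρ g⁻¹).trace = E.trace := by
    rw [Matrix.trace_mul_cycle, ← map_mul, inv_mul_cancel, map_one, Matrix.one_mul]
  have htrace : c * m = if j = j' then (Fintype.card G : ℂ) else 0 :=
    calc c * m = (∑ g, ρ g * E * ρ g⁻¹).trace := by simp [hc]
      _ = Fintype.card G * E.trace := by simp [Matrix.trace_sum, htrace_conj]
      _ = _ := by by_cases hj : j = j' <;> simp [E, hj, Matrix.trace_single_eq_of_ne]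
  rw [← sum_mul_single_mul_inv_apply, hc]
  by_cases hi : i = i' <;> by_cases hj : j = j' <;> simp_all [mul_comm]

end Orthogonality

namespace Equiv.Perm

theorem sign_sigmaCongrRight_mulSingle {α : Type*} [DecidableEq α] {β : α → Type*}
    [Fintype (Σ a, β a)] [∀ a, Fintype (β a)] [∀ a, DecidableEq (β a)] (a : α)
    (p : Perm (β a)) : sign (sigmaCongrRight (Pi.mulSingle a p)) = sign p := by
  refine (sign_bij (fun x _ => (⟨a, x⟩ : Σ a, β a)) (fun x _ _ => by simp)
    (fun _ _ _ _ h => sigma_mk_injective h) ?_).symm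
  rintro ⟨b, y⟩ hy
  by_cases hb : b = a
  · subst hb
    exact ⟨y, by simpa using hy, rfl⟩
  · simp [hb] at hy

theorem sign_sigmaCongrRight {α : Type*} [Fintype α] [DecidableEq α] {β : α → Type*}
    [∀ a, Fintype (β a)] [∀ a, DecidableEq (β a)] (σ : ∀ a, Perm (β a)) :
    sign (sigmaCongrRight σ) = ∏ a, sign (σ a) := by
  have hext : sign.comp (sigmaCongrRightHom β) =
      ∏ a, sign.comp (Pi.evalMonoidHom (fun a => Perm (β a)) a) :=
    MonoidHom.pi_ext fun a p => by
      rw [MonoidHom.finsetProd_apply,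
        prod_eq_single a (fun b _ hb => by simp [hb]) (by simp)]
      simp [sign_sigmaCongrRight_mulSingle]
  simpa [MonoidHom.finsetProd_apply] using DFunLike.congr_fun hext σ

theorem sign_prodComm_self (α : Type*) [Fintype α] [DecidableEq α] :
    sign (prodComm α α) = (-1) ^ (Fintype.card α * (Fintype.card α - 1) / 2) := by
  have hfix : Fintype.card (Function.fixedPoints (prodComm α α)) = Fintype.card α :=
    Fintype.card_congr
      { toFun x := x.1.1
        invFun a := ⟨(a, a), rfl⟩
        left_inv := by
          rintro ⟨⟨a, b⟩, h : (b, a) = (a, b)⟩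
          cases (Prod.ext_iff.mp h).1
          rfl
        right_inv _ := rfl }
  rw [sign_of_pow_two_eq_one (by ext <;> rfl), hfix, Fintype.card_prod, Nat.mul_sub_one]

theorem sign_equiv_inv (G : Type*) [Group G] [Fintype G] [DecidableEq G] :
    sign (Equiv.inv G) = (-1) ^ ((Fintype.card G - #{g : G | g = g⁻¹}) / 2) := by
  rw [sign_of_pow_two_eq_one (by ext; simp [sq])]
  congr
  simp [Function.fixedPoints, Function.IsFixedPt, Fintype.card_subtype, eq_comm]

end Equiv.Perm

theorem map_inv_eq_star {G M : Type*} [Group G] [Monoid M] [StarMul M] {ρ : G →* M}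
    (hρ : ∀ g, ρ g ∈ unitary M) (g : G) : ρ g⁻¹ = star (ρ g) :=
  (left_inv_eq_right_inv (Unitary.star_mul_self_of_mem (hρ g))
    (by rw [← map_mul, mul_inv_cancel, map_one])).symm

theorem Matrix.det_sq_eq_sign_mul_sign {ι R : Type*} [Fintype ι] [DecidableEq ι] [CommRing R]
    [StarRing R] {M : Matrix ι ι R} (hM : M * Mᴴ = 1) (σ τ : Equiv.Perm ι)
    (h : ∀ i j, star (M i j) = M (σ i) (τ j)) :
    M.det ^ 2 = ((Equiv.Perm.sign σ * Equiv.Perm.sign τ : ℤˣ) : ℤ) := by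
  set ε : R := (((Equiv.Perm.sign σ * Equiv.Perm.sign τ : ℤˣ) : ℤ) : R)
  have hconj : Mᴴ = ((M.submatrix σ id).submatrix id τ)ᵀ := by
    ext i j
    simp [h]
  have hdet : Mᴴ.det = ε * M.det := by
    rw [hconj, Matrix.det_transpose, Matrix.det_permute', Matrix.det_permute]
    push_cast [ε]
    ring
  have hε : ε ^ 2 = 1 := by
    rw [← Int.cast_pow, ← Units.val_pow_eq_pow_val, Int.units_sq, Units.val_one, Int.cast_one]
  calc M.det ^ 2 = M.det * Mᴴ.det * ε := by
        rw [hdet]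
        linear_combination (-M.det ^ 2) * hε
    _ = ε := by rw [← Matrix.det_mul, hM, Matrix.det_one, one_mul]

section FourierMatrix

variable {G : Type*} [Group G] [Fintype G] {T : Type*} {n : T → ℕ}

noncomputable def fourierMatrix (ρ : ∀ t, G →* Matrix (Fin (n t)) (Fin (n t)) ℂ) :
    Matrix (Σ t, Fin (n t) × Fin (n t)) G ℂ :=
  Matrix.of fun x g =>
    (Real.sqrt ((n x.1 : ℝ) / (Fintype.card G : ℝ)) : ℂ) * ρ x.1 g x.2.1 x.2.2

variable {ρ : ∀ t, G →* Matrix (Fin (n t)) (Fin (n t)) ℂ}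

theorem fourierMatrix_mul_conjTranspose_apply
    (hu : ∀ t g, ρ t g ∈ Matrix.unitaryGroup (Fin (n t)) ℂ)
    (t t' : T) (i j : Fin (n t)) (i' j' : Fin (n t')) :
    (fourierMatrix ρ * (fourierMatrix ρ)ᴴ) ⟨t, i, j⟩ ⟨t', i', j'⟩ =
      (Real.sqrt ((n t : ℝ) / Fintype.card G) * Real.sqrt ((n t' : ℝ) / Fintype.card G) : ℝ) *
        ∑ g, ρ t g i j * ρ t' g⁻¹ j' i' := by
  simp only [Matrix.mul_apply, Matrix.conjTranspose_apply, fourierMatrix, Matrix.of_apply,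
    star_mul', Complex.star_def, Complex.conj_ofReal, map_inv_eq_star (hu t'), mul_sum]
  refine sum_congr rfl fun g _ => ?_
  simp only [Matrix.star_apply, Complex.star_def]
  push_cast
  ring

theorem fourierMatrix_mul_conjTranspose [Fintype T] [DecidableEq T]
    (hρ : IsCompleteIrrFamily G n ρ) : fourierMatrix ρ * (fourierMatrix ρ)ᴴ = 1 := by
  have := hρ.irred
  ext ⟨t, i, j⟩ ⟨t', i', j'⟩
  rw [fourierMatrix_mul_conjTranspose_apply hρ.unitary]
  by_cases ht : t = t'
  · subst ht
    have hG : (Fintype.card G : ℂ) ≠ 0 := by simp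
    rw [← Real.sqrt_mul (by positivity), Real.sqrt_mul_self (by positivity)]
    push_cast
    rw [div_mul_eq_mul_div, natCast_mul_sum_apply_mul_inv_apply]
    by_cases h : i = i' ∧ j = j' <;> simp [h, Matrix.one_apply, hG]
  · rw [sum_apply_mul_inv_apply_eq_zero (hρ.noniso t' t (Ne.symm ht)), mul_zero,
      Matrix.one_apply_ne fun h => ht (congrArg Sigma.fst h)]

theorem star_fourierMatrix_apply (hu : ∀ t g, ρ t g ∈ Matrix.unitaryGroup (Fin (n t)) ℂ)
    (x : Σ t, Fin (n t) × Fin (n t)) (g : G) :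
    star (fourierMatrix ρ x g) =
      fourierMatrix ρ (Equiv.sigmaCongrRight (fun _ => Equiv.prodComm _ _) x) g⁻¹ := by
  simp [fourierMatrix, map_inv_eq_star (hu x.1)]

end FourierMatrix

/-- The square of the determinant of the group Fourier transform matrix
`U_{(t,i,j),g} = (n_t/|G|)^{1/2} ρ_t(g)_{ij}` (made square via any bijection
`e : G ≃ Σ t, Fin n_t × Fin n_t`) equals `(-1)^{(|G|-s)/2 + Σ_t n_t(n_t-1)/2}`,
where `s` is the number of elements of `G` equal to their own inverse. -/
theorem fourier_matrix_det_sq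
    (G : Type*) [Group G] [Fintype G] [DecidableEq G]
    (T : Type*) [Fintype T] (n : T → ℕ)
    (ρ : ∀ t, G →* Matrix (Fin (n t)) (Fin (n t)) ℂ)
    (hρ : IsCompleteIrrFamily G n ρ)
    (e : G ≃ Σ t : T, Fin (n t) × Fin (n t)) :
    let U : Matrix (Σ t : T, Fin (n t) × Fin (n t)) G ℂ :=
      fun s g => (Real.sqrt ((n s.1 : ℝ) / (Fintype.card G : ℝ)) : ℂ) * ρ s.1 g s.2.1 s.2.2
    let s : ℕ := (Finset.univ.filter fun g : G => g = g⁻¹).card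
    (Matrix.det (Matrix.of fun g h : G => U (e g) h)) ^ 2 =
      (-1 : ℂ) ^ ((Fintype.card G - s) / 2 + ∑ t, n t * (n t - 1) / 2) := by
  classical
  intro U s
  let transpose : Equiv.Perm (Σ t, Fin (n t) × Fin (n t)) :=
    Equiv.sigmaCongrRight fun _ => Equiv.prodComm _ _
  set M := (fourierMatrix ρ).submatrix e id
  have hunitary : M * Mᴴ = 1 := by
    rw [Matrix.conjTranspose_submatrix]
    exact (Matrix.submatrix_mul_equiv _ _ _ (Equiv.refl G) _).trans
      (by rw [fourierMatrix_mul_conjTranspose hρ, Matrix.submatrix_one_equiv])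
  have hstar (g h : G) : star (M g h) = M (e.symm.permCongr transpose g) (Equiv.inv G h) := by
    simp [M, star_fourierMatrix_apply hρ.unitary, Equiv.permCongr_apply, transpose]
  have hsign : Equiv.Perm.sign transpose = (-1) ^ ∑ t, n t * (n t - 1) / 2 := by
    simp [transpose, Equiv.Perm.sign_sigmaCongrRight, Equiv.Perm.sign_prodComm_self,
      prod_pow_eq_pow_sum]
  change M.det ^ 2 = _
  rw [Matrix.det_sq_eq_sign_mul_sign hunitary _ _ hstar, Equiv.Perm.sign_permCongr, hsign,
    Equiv.Perm.sign_equiv_inv, pow_add]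
  push_cast
  ring
end

section
/- Let d ≥ 2 be even, and let A be a finite-dimensional associative unital ℂ-algebra with two bases b and b' both indexed by Fin n. Then det_d(C^{A,b}(x)) ≠ 0 in MvPolynomial (Fin n) ℂ if and only if det_d(C^{A,b'}(x)) ≠ 0 in MvPolynomial (Fin n) ℂ; i.e., the vanishing of the algebra hyperdeterminant does not depend on the choice of basis. -/
open Classical in
/-- Cayley's combinatorial hyperdeterminant of a `d`-way hypermatrix:
`det_d(X) = Σ_{σ₂,…,σ_d ∈ Perm I} sgn(σ₂)⋯sgn(σ_d) ∏_i X(i, σ₂ i, …, σ_d i)`. -/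
noncomputable def hdet {I : Type*} [Fintype I] [DecidableEq I] {R : Type*} [CommRing R]
    (d : ℕ) (X : (Fin d → I) → R) : R :=
  ∑ σ : Fin d → Equiv.Perm I,
    if ∀ h : 0 < d, σ ⟨0, h⟩ = 1 then
      (∏ ℓ, (Equiv.Perm.sign (σ ℓ) : ℤ)) • ∏ i, X fun ℓ => σ ℓ i
    else 0
/-- The algebra hypermatrix `C^{A,b}(x)`: its entry at `(i₁,…,i_d)` is `Σ_k c_k x_k`,
where `c_k` are the coordinates of `b_{i₁} ⋯ b_{i_d}` in the basis `b`. -/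
noncomputable def algHyper {A : Type*} [Ring A] [Algebra ℂ A] (d : ℕ) {n : ℕ}
    (b : Module.Basis (Fin n) ℂ A) : (Fin d → Fin n) → MvPolynomial (Fin n) ℂ :=
  fun v => ∑ k, MvPolynomial.C (b.repr (List.ofFn fun ℓ => b (v ℓ)).prod k) * MvPolynomial.X k

/-!
Call `fullHdet` the hyperdeterminant sum taken over all `d`-tuples of permutations, without
normalising `σ₁ = 1`. For even `d` each of its terms is unchanged when every `σ_ℓ` is multiplied
on the right by the same permutation, so `fullHdet = n! • hdet`. Unlike `hdet`, `fullHdet` is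
equivariant like a determinant: applying a matrix `M` in each of the `d` slots multiplies it by
`det M ^ d`. Passing from `b` to `b'` does exactly this to the algebra hypermatrix, with `M` the
change-of-basis matrix, after the invertible linear substitution of variables that rewrites
`b`-coordinates as `b'`-coordinates. Hence `fullHdet (C^{A,b'})` is a unit times the image of
`fullHdet (C^{A,b})` under an automorphism of the polynomial ring.
-/

open Finset Equiv

section Hyperdeterminant

variable {I R : Type*} [Fintype I] [DecidableEq I] [CommRing R] {d : ℕ}

noncomputable def hdetTerm (X : (Fin d → I) → R) (σ : Fin d → Perm I) : R :=
  (∏ ℓ, (Perm.sign (σ ℓ) : ℤ)) • ∏ i, X fun ℓ => σ ℓ i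

noncomputable def fullHdet (d : ℕ) (X : (Fin d → I) → R) : R :=
  ∑ σ, hdetTerm X σ

def multilinearMul (M : Matrix I I R) (X : (Fin d → I) → R) : (Fin d → I) → R :=
  fun v => ∑ w, (∏ ℓ, M (v ℓ) (w ℓ)) * X w

theorem hdetTerm_mul_const (hde : Even d) (X : (Fin d → I) → R) (σ : Fin d → Perm I)
    (π : Perm I) : hdetTerm X (σ * Function.const _ π) = hdetTerm X σ := by
  have sign_eq :
      ∏ ℓ, (Perm.sign (σ ℓ * π) : ℤ) = ∏ ℓ, (Perm.sign (σ ℓ) : ℤ) := by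
    simp only [Perm.sign_mul, Units.val_mul, prod_mul_distrib, prod_const, card_univ,
      Fintype.card_fin]
    rcases Int.units_eq_one_or (Perm.sign π) with h | h <;> simp [h, hde.neg_one_pow]
  simp only [hdetTerm, Pi.mul_apply, Function.const_apply, sign_eq, Perm.coe_mul,
    Function.comp_apply, Equiv.prod_comp π fun i => X fun ℓ => σ ℓ i]

theorem fullHdet_eq_card_smul_hdet (hd : 0 < d) (hde : Even d) (X : (Fin d → I) → R) :
    fullHdet d X = Fintype.card (Perm I) • hdet d X := by
  set i₀ : Fin d := ⟨0, hd⟩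
  -- right multiplication by `Function.const _ π` maps the fibre over `1` onto that over `π`
  have hdet_eq (π : Perm I) : hdet d X = ∑ σ, if σ i₀ = π then hdetTerm X σ else 0 := by
    calc hdet d X = ∑ σ, if σ i₀ = 1 then hdetTerm X σ else 0 := by
          simp only [hdet, hdetTerm, i₀]
          exact sum_congr rfl fun σ _ => by congr 1; simp [hd]
      _ = _ := Fintype.sum_equiv (Equiv.mulRight (Function.const _ π)) _ _ fun σ => by
          simp [hdetTerm_mul_const hde, mul_eq_right]
  calc fullHdet d X = ∑ σ, ∑ π, if σ i₀ = π then hdetTerm X σ else 0 := by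
        simp [fullHdet]
    _ = ∑ _π : Perm I, hdet d X := by rw [sum_comm]; simp only [← hdet_eq]
    _ = Fintype.card (Perm I) • hdet d X := by simp

theorem map_fullHdet {S F : Type*} [CommRing S] [FunLike F R S] [RingHomClass F R S] (f : F)
    (X : (Fin d → I) → R) : f (fullHdet d X) = fullHdet d fun v => f (X v) := by
  simp [fullHdet, hdetTerm, map_sum, map_prod]

theorem Matrix.det_submatrix_eq_zero_of_not_injective (M : Matrix I I R) {f : I → I}
    (hf : ¬ f.Injective) : (M.submatrix id f).det = 0 := by
  obtain ⟨a, c, hac, hne⟩ := Function.not_injective_iff.mp hf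
  exact Matrix.det_zero_of_column_eq hne fun k => by simp [hac]

theorem fullHdet_multilinearMul_eq_sum (M : Matrix I I R) (X : (Fin d → I) → R) :
    fullHdet d (multilinearMul M X) = ∑ h : I → Fin d → I,
      (∏ ℓ, (M.submatrix id fun i => h i ℓ).det) * ∏ i, X (h i) := by
  have det_eq (f : I → I) :
      (M.submatrix id f).det = ∑ π : Perm I, (Perm.sign π : R) * ∏ i, M (π i) (f i) := by
    simp [Matrix.det_apply, Units.smul_def]
  have term_eq (σ : Fin d → Perm I) : hdetTerm (multilinearMul M X) σ =
      ∑ h : I → Fin d → I,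
        (∏ ℓ, (Perm.sign (σ ℓ) : R) * ∏ i, M (σ ℓ i) (h i ℓ)) * ∏ i, X (h i) := by
    simp only [hdetTerm, multilinearMul, Fintype.prod_sum, smul_sum, zsmul_eq_mul]
    refine sum_congr rfl fun h _ => ?_
    rw [prod_mul_distrib, prod_mul_distrib, prod_comm (f := fun i ℓ => M (σ ℓ i) (h i ℓ))]
    push_cast
    ring
  simp only [fullHdet, term_eq, det_eq]
  rw [sum_comm]
  refine sum_congr rfl fun h _ => ?_
  rw [← sum_mul, Fintype.prod_sum]

theorem sum_eq_sum_perms {F : (I → Fin d → I) → R}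
    (hF : ∀ h ℓ, ¬ (fun i => h i ℓ).Injective → F h = 0) :
    ∑ h, F h = ∑ ρ : Fin d → Perm I, F fun i ℓ => ρ ℓ i := by
  refine (Fintype.sum_of_injective (fun (ρ : Fin d → Perm I) i ℓ => ρ ℓ i) ?_ _ F ?_
    fun _ => rfl).symm
  · intro ρ ρ' h
    funext ℓ
    exact Equiv.ext fun i => congrFun (congrFun h i) ℓ
  · intro h hh
    by_contra hne
    obtain ⟨ℓ, hℓ⟩ : ∃ ℓ, ¬ (fun i => h i ℓ).Injective := by
      by_contra! hinj
      exact hh ⟨fun ℓ => Equiv.ofBijective _ (hinj ℓ).bijective_of_finite, rfl⟩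
    exact hne (hF h ℓ hℓ)

theorem fullHdet_multilinearMul (M : Matrix I I R) (X : (Fin d → I) → R) :
    fullHdet d (multilinearMul M X) = M.det ^ d * fullHdet d X := by
  rw [fullHdet_multilinearMul_eq_sum, sum_eq_sum_perms fun h ℓ hℓ => by
    rw [prod_eq_zero (mem_univ ℓ) (M.det_submatrix_eq_zero_of_not_injective hℓ), zero_mul]]
  simp only [Matrix.det_permute', fullHdet, hdetTerm, mul_sum, prod_mul_distrib, prod_const,
    card_univ, Fintype.card_fin, zsmul_eq_mul]
  refine sum_congr rfl fun ρ _ => ?_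
  push_cast
  ring

end Hyperdeterminant

section BasisChange

open MvPolynomial

variable {ι R M : Type*} [CommRing R] [AddCommGroup M] [Module R M]

/-- `b.constr R X` is the generic linear form `a ↦ ∑ k, b.repr a k • X k`; `b.changeVars b'`
substitutes for each `X m` the `b'`-form of `b m`. -/
noncomputable def Module.Basis.changeVars (b b' : Module.Basis ι R M) :
    MvPolynomial ι R →ₐ[R] MvPolynomial ι R :=
  aeval fun m => b'.constr R X (b m)

theorem Module.Basis.changeVars_constr (b b' : Module.Basis ι R M) (a : M) :
    b.changeVars b' (b.constr R X a) = b'.constr R X a := by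
  have h : (b.changeVars b').toLinearMap ∘ₗ b.constr R X = b'.constr R X :=
    b.ext fun m => by simp [changeVars]
  exact LinearMap.congr_fun h a

theorem Module.Basis.changeVars_injective (b b' : Module.Basis ι R M) :
    Function.Injective (b.changeVars b') := by
  have h : (b'.changeVars b).comp (b.changeVars b') = AlgHom.id R _ :=
    algHom_ext fun m => by
      simpa [changeVars] using b'.changeVars_constr b (b m)
  exact Function.LeftInverse.injective (g := b'.changeVars b) fun p => AlgHom.congr_fun h p

end BasisChange

theorem List.prod_ofFn_sum_smul {ι R A : Type*} [Fintype ι] [CommSemiring R] [Semiring A]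
    [Algebra R A] {d : ℕ} (c : Fin d → ι → R) (a : ι → A) :
    (List.ofFn fun ℓ => ∑ j, c ℓ j • a j).prod =
      ∑ w : Fin d → ι, (∏ ℓ, c ℓ (w ℓ)) • (List.ofFn fun ℓ => a (w ℓ)).prod := by
  simp only [← MultilinearMap.mkPiAlgebraFin_apply (R := R), MultilinearMap.map_sum,
    MultilinearMap.map_smul_univ]

section AlgebraHypermatrix

open MvPolynomial
open scoped Matrix

variable {A : Type*} [Ring A] [Algebra ℂ A] {d n : ℕ}

theorem algHyper_apply (b : Module.Basis (Fin n) ℂ A) (v : Fin d → Fin n) :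
    algHyper d b v = b.constr ℂ X (List.ofFn fun ℓ => b (v ℓ)).prod := by
  simp [algHyper, Module.Basis.constr_apply_fintype, smul_eq_C_mul]

theorem algHyper_eq_multilinearMul (b b' : Module.Basis (Fin n) ℂ A) :
    algHyper d b' =
      multilinearMul ((b.toMatrix b').map C)ᵀ fun w => b.changeVars b' (algHyper d b w) := by
  funext v
  have expand : (List.ofFn fun ℓ => b' (v ℓ)).prod = ∑ w : Fin d → Fin n,
      (∏ ℓ, b.toMatrix b' (w ℓ) (v ℓ)) • (List.ofFn fun ℓ => b (w ℓ)).prod := by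
    simp only [← List.prod_ofFn_sum_smul, Module.Basis.toMatrix_apply, b.sum_repr]
  simp only [algHyper_apply, expand, map_sum, map_smul, multilinearMul,
    Module.Basis.changeVars_constr, smul_eq_C_mul, map_prod, Matrix.transpose_apply,
    Matrix.map_apply]

theorem fullHdet_algHyper_eq (b b' : Module.Basis (Fin n) ℂ A) :
    fullHdet d (algHyper d b') =
      C (b.toMatrix b').det ^ d * b.changeVars b' (fullHdet d (algHyper d b)) := by
  rw [algHyper_eq_multilinearMul b b', fullHdet_multilinearMul, Matrix.det_transpose,
    ← RingHom.mapMatrix_apply, ← RingHom.map_det, map_fullHdet]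

end AlgebraHypermatrix

/-- For even `d ≥ 2`, the vanishing of the algebra hyperdeterminant does not depend on the
choice of basis: for two bases `b, b'` of `A`, `det_d(C^{A,b}(x)) ≠ 0 ↔ det_d(C^{A,b'}(x)) ≠ 0`. -/
theorem algebra_hyperdeterminant_vanishing_basis_independent (d : ℕ) (hd : 2 ≤ d) (hde : Even d)
    (A : Type*) [Ring A] [Algebra ℂ A]
    (n : ℕ) (b b' : Module.Basis (Fin n) ℂ A) :
    hdet d (algHyper d b) ≠ 0 ↔ hdet d (algHyper d b') ≠ 0 := by
  have hd₀ : 0 < d := by omega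
  have hdet_eq_zero_iff (c : Module.Basis (Fin n) ℂ A) :
      hdet d (algHyper d c) = 0 ↔ fullHdet d (algHyper d c) = 0 := by
    rw [fullHdet_eq_card_smul_hdet hd₀ hde, smul_eq_zero, or_iff_right Fintype.card_ne_zero]
  have hdet_ne_zero : (b.toMatrix b').det ≠ 0 :=
    (Matrix.isUnit_det_of_right_inverse (b.toMatrix_mul_toMatrix_flip b')).ne_zero
  rw [not_iff_not, hdet_eq_zero_iff, hdet_eq_zero_iff, fullHdet_algHyper_eq b b', mul_eq_zero,
    pow_eq_zero_iff hd₀.ne', MvPolynomial.C_eq_zero, or_iff_right hdet_ne_zero,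
    map_eq_zero_iff _ (b.changeVars_injective b')]
end
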